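/- arXiv:math/0405180 — 5 statements merged into one kernel-verified Lean document; each statement's English description precedes it below -/
import Mathlib

section
/- There exists an absolute constant C > 0 with the following property. Let c₁, c₂ be positive real numbers with c₁ ≤ c₂, let 0 < ε < 1/2, and let n be a nonnegative integer. Let S = { x ∈ ℝ_{≥0}^n : c₁ ≤ x₁ + ⋯ + x_n < c₂ }. Then there exists a finite subset T ⊆ ℝ_{≥0}^n with #T ≤ C^n · ε^{−(n+1)} · (1 + log(c₂/c₁)) such that for every x ∈ S there is some P ∈ T with |x − P|₁ ≤ ε·|P|₁. -/
/-!
Split the slab into the dyadic shells `t ≤ |x|₁ < 2t`, `t = c₁ 2ᵏ`, `k ≤ log₂ (c₂/c₁)`. On a shell,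
rounding every coordinate of `x` down to the grid `δ ℕ`, `δ = ε t / (2n)`, gives a point `P` with
`|x - P|₁ ≤ n δ = ε t / 2 ≤ ε |P|₁`, and `P = δ q` for a lattice point `q` of the simplex
`Σ qᵢ ≤ n m`, `m = ⌈4/ε⌉`. Comparing with a generating function,
`#{q ∈ ℕⁿ : Σ qᵢ ≤ M} · x ^ M ≤ (1 - x)⁻ⁿ`, and the choice `x = m / (m + 1)` bounds the number of
these lattice points by `(e (m + 1))ⁿ = O(1/ε)ⁿ`.
-/

open Finset Real

def simplexLattice (n M : ℕ) : Finset (Fin n → ℕ) :=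
  (Fintype.piFinset fun _ => range (M + 1)).filter fun q => ∑ i, q i ≤ M

lemma card_simplexLattice_mul_pow_le {K : Type*} [Field K] [LinearOrder K] [IsStrictOrderedRing K]
    {n M : ℕ} {x : K} (hx₀ : 0 ≤ x) (hx₁ : x < 1) :
    #(simplexLattice n M) * x ^ M ≤ (1 - x)⁻¹ ^ n := by
  calc (#(simplexLattice n M) : K) * x ^ M = ∑ _q ∈ simplexLattice n M, x ^ M := by
        rw [sum_const, nsmul_eq_mul]
    _ ≤ ∑ q ∈ simplexLattice n M, x ^ ∑ i, q i :=
        sum_le_sum fun _ hq => pow_le_pow_of_le_one hx₀ hx₁.le (mem_filter.1 hq).2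
    _ ≤ ∑ q ∈ Fintype.piFinset fun _ : Fin n => range (M + 1), x ^ ∑ i, q i :=
        sum_le_sum_of_subset_of_nonneg (filter_subset _ _) fun _ _ _ => by positivity
    _ = (∑ j ∈ range (M + 1), x ^ j) ^ n := by
        simp_rw [← prod_pow_eq_pow_sum, ← prod_univ_sum, prod_const, card_univ, Fintype.card_fin]
    _ ≤ (1 - x)⁻¹ ^ n := by
        refine pow_le_pow_left₀ (by positivity) ?_ n
        simpa [← range_eq_Ico] using geom_sum_Ico_le_of_lt_one (m := 0) (n := M + 1) hx₀ hx₁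

lemma card_simplexLattice_le {n m : ℕ} (hm : 0 < m) :
    (#(simplexLattice n (n * m)) : ℝ) ≤ (exp 1 * (m + 1)) ^ n := by
  set x : ℝ := (1 + (m : ℝ)⁻¹)⁻¹
  have hx₀ : 0 < x := by positivity
  have hx₁ : x < 1 := inv_lt_one_of_one_lt₀ (by simp [hm])
  have hgap : (1 - x)⁻¹ = m + 1 := by
    simp only [x]; field_simp; ring
  have hxpow : (exp 1)⁻¹ ^ n ≤ x ^ (n * m) := by
    rw [mul_comm, pow_mul]
    refine pow_le_pow_left₀ (by positivity) ?_ n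
    rw [inv_pow]
    exact inv_anti₀ (by positivity) one_add_inv_pow_le_exp
  have hcount := card_simplexLattice_mul_pow_le (n := n) (M := n * m) hx₀.le hx₁
  rw [hgap] at hcount
  calc (#(simplexLattice n (n * m)) : ℝ) ≤ (m + 1) ^ n / x ^ (n * m) :=
        (le_div_iff₀ (by positivity)).2 hcount
    _ ≤ (m + 1) ^ n / (exp 1)⁻¹ ^ n := by gcongr
    _ = (exp 1 * (m + 1)) ^ n := by rw [inv_pow, div_inv_eq_mul, mul_pow, mul_comm]

lemma mul_natFloor_div_le {a δ : ℝ} (ha : 0 ≤ a) (hδ : 0 < δ) : δ * ⌊a / δ⌋₊ ≤ a := by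
  rw [← le_div_iff₀' hδ]
  exact Nat.floor_le (div_nonneg ha hδ.le)

lemma lt_mul_natFloor_div_add {a δ : ℝ} (hδ : 0 < δ) : a < δ * ⌊a / δ⌋₊ + δ := by
  have := Nat.lt_floor_add_one (a / δ)
  rw [div_lt_iff₀ hδ] at this
  linarith

lemma natFloor_div_mem_simplexLattice {n M : ℕ} {δ : ℝ} (hδ : 0 < δ) {x : Fin n → ℝ}
    (hx : ∀ i, 0 ≤ x i) (hxM : ∑ i, x i < δ * M) :
    (fun i => ⌊x i / δ⌋₊) ∈ simplexLattice n M := by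
  have hsum : ∑ i, ⌊x i / δ⌋₊ < M := by
    have : δ * ∑ i, (⌊x i / δ⌋₊ : ℝ) < δ * M := by
      rw [mul_sum]
      exact (sum_le_sum fun i _ => mul_natFloor_div_le (hx i) hδ).trans_lt hxM
    exact_mod_cast lt_of_mul_lt_mul_left this hδ.le
  refine mem_filter.2 ⟨Fintype.mem_piFinset.2 fun i => mem_range.2 ?_, hsum.le⟩
  have := single_le_sum (fun j _ => Nat.zero_le ⌊x j / δ⌋₊) (mem_univ i)
  omega

noncomputable def shellNet (n m : ℕ) (ε t : ℝ) : Finset (Fin n → ℝ) :=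
  (simplexLattice n (n * m)).image fun q i => ε * t / (2 * n) * q i

lemma card_shellNet_le {n m : ℕ} (hm : 0 < m) (ε t : ℝ) :
    (#(shellNet n m ε t) : ℝ) ≤ (exp 1 * (m + 1)) ^ n :=
  (Nat.cast_le.2 card_image_le).trans (card_simplexLattice_le hm)

lemma nonneg_of_mem_shellNet {n m : ℕ} {ε t : ℝ} (hε : 0 ≤ ε) (ht : 0 ≤ t) {P : Fin n → ℝ}
    (hP : P ∈ shellNet n m ε t) (i : Fin n) : 0 ≤ P i := by
  obtain ⟨q, -, rfl⟩ := mem_image.1 hP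
  positivity

lemma exists_mem_shellNet_sum_abs_sub_le {n m : ℕ} {ε t : ℝ} (hε : 0 < ε) (hε₁ : ε ≤ 1)
    (hm : 4 / ε ≤ m) {x : Fin n → ℝ} (hx : ∀ i, 0 ≤ x i) (ht : t ≤ ∑ i, x i)
    (ht₂ : ∑ i, x i < 2 * t) :
    ∃ P ∈ shellNet n m ε t, ∑ i, |x i - P i| ≤ ε * ∑ i, |P i| := by
  have ht₀ : 0 < t := by linarith
  have hn : 0 < n := Nat.pos_of_ne_zero <| by
    rintro rfl
    simp only [univ_eq_empty, sum_empty] at ht ht₂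
    linarith
  set δ := ε * t / (2 * n) with hδ
  have hδ₀ : 0 < δ := by positivity
  have hnδ : n * δ = ε * t / 2 := by rw [hδ]; field_simp
  set q : Fin n → ℕ := fun i => ⌊x i / δ⌋₊
  have hle : ∀ i, δ * q i ≤ x i := fun i => mul_natFloor_div_le (hx i) hδ₀
  have hsum_lt : ∑ i, x i < ∑ i, δ * q i + n * δ := by
    calc ∑ i, x i < ∑ i, (δ * q i + δ) :=
          sum_lt_sum_of_nonempty ⟨⟨0, hn⟩, mem_univ _⟩ fun i _ => lt_mul_natFloor_div_add hδ₀
      _ = ∑ i, δ * q i + n * δ := by simp [sum_add_distrib]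
  have hq : q ∈ simplexLattice n (n * m) := natFloor_div_mem_simplexLattice hδ₀ hx <| by
    calc ∑ i, x i < 2 * t := ht₂
      _ = 4 / ε * (n * δ) := by rw [hnδ]; field_simp; ring
      _ ≤ m * (n * δ) := by gcongr
      _ = δ * ↑(n * m) := by push_cast; ring
  refine ⟨fun i => δ * q i, mem_image_of_mem _ hq, ?_⟩
  have herr : ∑ i, |x i - δ * q i| = ∑ i, x i - ∑ i, δ * q i := by
    rw [← sum_sub_distrib]
    exact sum_congr rfl fun i _ => abs_of_nonneg (sub_nonneg.2 (hle i))
  have hnorm : ∑ i, |δ * q i| = ∑ i, δ * q i :=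
    sum_congr rfl fun i _ => abs_of_nonneg (mul_nonneg hδ₀.le (Nat.cast_nonneg _))
  have hlarge : t / 2 ≤ ∑ i, δ * q i := by
    linarith [mul_le_of_le_one_left ht₀.le hε₁]
  rw [herr, hnorm]
  linarith [mul_le_mul_of_nonneg_left hlarge hε.le]

lemma exists_dyadic_shell {c₁ c₂ s : ℝ} (hc₁ : 0 < c₁) (hs₁ : c₁ ≤ s) (hs₂ : s < c₂) :
    ∃ k < ⌊logb 2 (c₂ / c₁)⌋₊ + 1, c₁ * 2 ^ k ≤ s ∧ s < 2 * (c₁ * 2 ^ k) := by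
  obtain ⟨k, hk₁, hk₂⟩ := exists_nat_pow_near ((one_le_div hc₁).2 hs₁) one_lt_two
  rw [le_div_iff₀ hc₁] at hk₁
  rw [div_lt_iff₀ hc₁, pow_succ] at hk₂
  refine ⟨k, Nat.lt_succ_of_le (Nat.le_floor ?_), by linarith, by linarith⟩
  rw [le_logb_iff_rpow_le one_lt_two (div_pos (by linarith) hc₁), rpow_natCast, le_div_iff₀ hc₁]
  linarith

lemma floor_logb_two_add_one_le {r : ℝ} (hr : 1 ≤ r) :
    ((⌊logb 2 r⌋₊ + 1 : ℕ) : ℝ) ≤ 2 * (1 + log r) := by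
  have hlog : 0 ≤ log r := log_nonneg hr
  have hlogb : logb 2 r ≤ 2 * log r := by
    rw [logb, div_le_iff₀ (log_pos one_lt_two)]
    nlinarith [log_two_gt_d9]
  push_cast
  linarith [Nat.floor_le (logb_nonneg one_lt_two hr)]

lemma exp_one_mul_ceil_add_one_le {ε : ℝ} (hε : 0 < ε) (hε₂ : ε ≤ 1 / 2) :
    exp 1 * ((⌈4 / ε⌉₊ : ℝ) + 1) ≤ 14 / ε := by
  have hceil : (⌈4 / ε⌉₊ : ℝ) + 1 ≤ 5 / ε := by
    have := Nat.ceil_lt_add_one (show 0 ≤ 4 / ε by positivity)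
    have : 2 ≤ 1 / ε := by rw [le_div_iff₀ hε]; linarith
    have : 5 / ε = 4 / ε + 1 / ε := by ring
    linarith
  calc exp 1 * ((⌈4 / ε⌉₊ : ℝ) + 1) ≤ 2.7182818286 * (5 / ε) := by
        gcongr; exact exp_one_lt_d9.le
    _ ≤ 14 / ε := by rw [← mul_div_assoc]; gcongr; norm_num

/-- There is an absolute constant `C > 0` such that for all `0 < c₁ ≤ c₂`, `0 < ε < 1/2` and
every `n`, the slab `S = {x ∈ ℝ_{≥0}ⁿ : c₁ ≤ Σ xᵢ < c₂}` can be covered by the `ℓ¹`-balls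
`B(P, ε·|P|₁)`, `P ∈ T`, for a finite set `T ⊆ ℝ_{≥0}ⁿ` of cardinality at most
`Cⁿ · ε^{−(n+1)} · (1 + log(c₂/c₁))`. -/
theorem covering_slab_l1 :
    ∃ C : ℝ, 0 < C ∧
      ∀ c₁ c₂ : ℝ, 0 < c₁ → c₁ ≤ c₂ →
      ∀ ε : ℝ, 0 < ε → ε < 1 / 2 →
      ∀ n : ℕ,
        ∃ T : Finset (Fin n → ℝ),
          (∀ P ∈ T, ∀ i, 0 ≤ P i) ∧
          (T.card : ℝ) ≤ C ^ n * ε ^ (-(n + 1 : ℤ)) * (1 + Real.log (c₂ / c₁)) ∧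
          ∀ x : Fin n → ℝ, (∀ i, 0 ≤ x i) →
            c₁ ≤ ∑ i, x i → (∑ i, x i) < c₂ →
            ∃ P ∈ T, (∑ i, |x i - P i|) ≤ ε * ∑ i, |P i| := by
  refine ⟨14, by norm_num, fun c₁ c₂ hc₁ hc₁₂ ε hε hε₂ n => ?_⟩
  have hr : 1 ≤ c₂ / c₁ := (one_le_div hc₁).2 hc₁₂
  have hm : 0 < ⌈4 / ε⌉₊ := Nat.ceil_pos.2 (by positivity)
  set K := ⌊logb 2 (c₂ / c₁)⌋₊ + 1
  refine ⟨(range K).biUnion fun k => shellNet n ⌈4 / ε⌉₊ ε (c₁ * 2 ^ k), ?_, ?_, ?_⟩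
  · simp only [mem_biUnion]
    rintro P ⟨k, -, hP⟩
    exact nonneg_of_mem_shellNet hε.le (by positivity) hP
  · have h2ε : 2 ≤ ε⁻¹ := by rw [le_inv_comm₀ (by norm_num) hε]; linarith
    have hlog : 0 ≤ 1 + log (c₂ / c₁) := by linarith [log_nonneg hr]
    calc _ ≤ ∑ k ∈ range K, (#(shellNet n ⌈4 / ε⌉₊ ε (c₁ * 2 ^ k)) : ℝ) := by
          exact_mod_cast card_biUnion_le
      _ ≤ K * (exp 1 * (⌈4 / ε⌉₊ + 1)) ^ n :=
          (sum_le_sum fun _ _ => card_shellNet_le hm _ _).trans_eq (by simp)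
      _ ≤ 2 * (1 + log (c₂ / c₁)) * (14 / ε) ^ n := by
          gcongr
          · exact floor_logb_two_add_one_le hr
          · exact exp_one_mul_ceil_add_one_le hε hε₂.le
      _ ≤ ε⁻¹ * (1 + log (c₂ / c₁)) * (14 / ε) ^ n := by gcongr
      _ = 14 ^ n * ε ^ (-(n + 1 : ℤ)) * (1 + log (c₂ / c₁)) := by
          rw [zpow_neg, zpow_add₀ hε.ne', zpow_natCast, zpow_one, div_pow]
          ring
  · intro x hx hs₁ hs₂
    obtain ⟨k, hk, hkt, hkt₂⟩ := exists_dyadic_shell hc₁ hs₁ hs₂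
    obtain ⟨P, hP, hxP⟩ :=
      exists_mem_shellNet_sum_abs_sub_le hε (by linarith) (Nat.le_ceil _) hx hkt hkt₂
    exact ⟨P, mem_biUnion.2 ⟨k, mem_range.2 hk, hP⟩, hxP⟩
end

section
/- Let B₂(t) = t² − t + 1/6. Let 0 < ε < 2/15 and let u be a real number with 0 < u ≤ 1/2. Then B₂(u/2) ≥ (1 − ε)·B₂(u) + ε/12 and B₂(u/2) ≥ (1 − 2ε)·B₂(u) + ε/12. Moreover, for all real s, t with u ≤ s ≤ t ≤ min(3u/2, 1/2), one has B₂(t − s) ≥ (1 − ε)·max(B₂(s), B₂(t)) + ε/12 and B₂(t − s) ≥ (1 − 2ε)·max(B₂(s), B₂(t)) + ε/12. -/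
/-- Let `B₂(t) = t² − t + 1/6`, `0 < ε < 2/15` and `0 < u ≤ 1/2`. Then
`B₂(u/2) ≥ (1 − ε)·B₂(u) + ε/12` and `B₂(u/2) ≥ (1 − 2ε)·B₂(u) + ε/12`; moreover for all
`u ≤ s ≤ t ≤ min(3u/2, 1/2)`, one has `B₂(t − s) ≥ (1 − ε)·max(B₂(s), B₂(t)) + ε/12` and
`B₂(t − s) ≥ (1 − 2ε)·max(B₂(s), B₂(t)) + ε/12`. -/
theorem bernoulli_two_dyadic_bound
    (B₂ : ℝ → ℝ) (hB₂ : ∀ x : ℝ, B₂ x = x ^ 2 - x + 1 / 6)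
    (ε : ℝ) (hε0 : 0 < ε) (hε : ε < 2 / 15)
    (u : ℝ) (hu0 : 0 < u) (hu : u ≤ 1 / 2) :
    (B₂ (u / 2) ≥ (1 - ε) * B₂ u + ε / 12 ∧
      B₂ (u / 2) ≥ (1 - 2 * ε) * B₂ u + ε / 12) ∧
    ∀ s t : ℝ, u ≤ s → s ≤ t → t ≤ min (3 * u / 2) (1 / 2) →
      B₂ (t - s) ≥ (1 - ε) * max (B₂ s) (B₂ t) + ε / 12 ∧
        B₂ (t - s) ≥ (1 - 2 * ε) * max (B₂ s) (B₂ t) + ε / 12 := by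
  have h1 : B₂ (u / 2) ≥ (1 - ε) * B₂ u + ε / 12 := by
    rw [hB₂, hB₂]
    nlinarith [mul_pos hu0 hε0, sq_nonneg u, mul_nonneg hu0.le (sub_nonneg.2 hu),
      mul_nonneg hε0.le (mul_nonneg hu0.le (sub_nonneg.2 hu))]
  have h2 : B₂ (u / 2) ≥ (1 - 2 * ε) * B₂ u + ε / 12 := by
    rw [hB₂, hB₂]
    nlinarith [mul_pos hu0 hε0, sq_nonneg u, mul_nonneg hu0.le (sub_nonneg.2 hu),
      mul_nonneg hε0.le (mul_nonneg hu0.le (sub_nonneg.2 hu)),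
      mul_nonneg (sub_nonneg.2 hε.le) (mul_nonneg hu0.le (sub_nonneg.2 hu))]
  refine ⟨⟨h1, h2⟩, fun s t hus hst ht => ?_⟩
  have ht1 : t ≤ 3 * u / 2 := le_trans ht (min_le_left _ _)
  have ht2 : t ≤ 1 / 2 := le_trans ht (min_le_right _ _)
  -- max is B₂ s since B₂ is decreasing on [0,1/2]
  have hst' : B₂ t ≤ B₂ s := by
    rw [hB₂, hB₂]
    nlinarith [mul_nonneg (sub_nonneg.2 hst) (by linarith : (0:ℝ) ≤ 1 - s - t)]
  have hmax : max (B₂ s) (B₂ t) = B₂ s := max_eq_left hst'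
  have hsu : B₂ s ≤ B₂ u := by
    rw [hB₂, hB₂]
    nlinarith [mul_nonneg (sub_nonneg.2 hus) (by linarith : (0:ℝ) ≤ 1 - s - u)]
  have hts : B₂ (t - s) ≥ B₂ (u / 2) := by
    rw [hB₂, hB₂]
    nlinarith [mul_nonneg (by linarith : (0:ℝ) ≤ u / 2 - (t - s))
      (by linarith : (0:ℝ) ≤ 1 - (t - s) - u / 2)]
  rw [hmax]
  constructor
  · nlinarith [mul_nonneg (by linarith : (0:ℝ) ≤ 1 - ε) (sub_nonneg.2 hsu)]
  · nlinarith [mul_nonneg (by linarith : (0:ℝ) ≤ 1 - 2 * ε) (sub_nonneg.2 hsu)]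
end

section
/- Define f(t) = √((1+t)(3−t))/2 and, for t ∈ [0, 1), β(t) = ((1 + f(t))/(2 f(t)))·log((1 + f(t))/(2 f(t))) − ((1 − f(t))/(2 f(t)))·log((1 − f(t))/(2 f(t))). Then β(t) → 0 as t → 1⁻, and moreover lim_{t → 1⁻} β(t)/(1 − t) = 0. Consequently, for every real x > 0 there exists t ∈ [0, 1) with x·t + β(t) < x; that is, setting β(1) = 0 and α(x) = inf_{t ∈ [0,1]} (x·t + β(t)), one has α(x) < x for every x > 0. -/
open Real Filter

lemma neg_mul_log_le (v : ℝ) (hv : 0 < v) :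
    -(v * Real.log v) ≤ 4 * Real.sqrt v * Real.sqrt (Real.sqrt v) := by
  set a := Real.sqrt v with ha'
  set b := Real.sqrt a with hb'
  have hapos : 0 < a := Real.sqrt_pos.mpr hv
  have hbpos : 0 < b := Real.sqrt_pos.mpr hapos
  have hlog : Real.log v = 4 * Real.log b := by
    rw [hb', Real.log_sqrt hapos.le, ha', Real.log_sqrt hv.le]; ring
  have h1 : -Real.log b ≤ 1 / b := by
    have h := Real.log_le_sub_one_of_pos (show (0:ℝ) < 1/b by positivity)
    rw [one_div, Real.log_inv] at h
    have : (0:ℝ) < b⁻¹ := by positivity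
    rw [one_div]
    linarith
  have hv_eq : v = a * a := (Real.mul_self_sqrt hv.le).symm
  have ha_eq : a = b * b := (Real.mul_self_sqrt hapos.le).symm
  have key : -(v * Real.log v) ≤ v * (4 * (1/b)) := by
    rw [hlog]
    have : v * (4 * (-Real.log b)) ≤ v * (4 * (1/b)) := by
      apply mul_le_mul_of_nonneg_left _ hv.le
      linarith
    linarith [this]
  calc -(v * Real.log v) ≤ v * (4 * (1/b)) := key
    _ = 4 * a * b := by
        rw [hv_eq, ha_eq]; field_simp

lemma beta_bd (f β : ℝ → ℝ)
    (hf : ∀ t : ℝ, f t = Real.sqrt ((1 + t) * (3 - t)) / 2)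
    (hβ : ∀ t : ℝ, t ≠ 1 →
      β t = ((1 + f t) / (2 * f t)) * Real.log ((1 + f t) / (2 * f t)) -
        ((1 - f t) / (2 * f t)) * Real.log ((1 - f t) / (2 * f t)))
    (t : ℝ) (h0 : 0 ≤ t) (h1 : t < 1) :
    0 ≤ β t ∧ β t ≤ (1 - t)^2/2 + 2*(1-t)*Real.sqrt (1-t) := by
  have hA1 : (1:ℝ) ≤ (1 + t) * (3 - t) := by nlinarith
  have hA4 : (1 + t) * (3 - t) < 4 := by nlinarith
  have hA0 : (0:ℝ) ≤ (1 + t) * (3 - t) := by linarith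
  set F := f t with hF
  have hsq1 : (1:ℝ) ≤ Real.sqrt ((1 + t) * (3 - t)) := by
    have h := Real.sqrt_le_sqrt hA1
    rwa [Real.sqrt_one] at h
  have hsq2 : Real.sqrt ((1 + t) * (3 - t)) < 2 := by
    rw [show (2:ℝ) = Real.sqrt 4 from by rw [show (4:ℝ) = 2^2 by norm_num, Real.sqrt_sq]; norm_num]
    exact Real.sqrt_lt_sqrt hA0 (by linarith)
  have hF1 : 1/2 ≤ F := by rw [hF, hf]; linarith
  have hFlt : F < 1 := by rw [hF, hf]; linarith
  have hFpos : 0 < F := by linarith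
  have hFsq : F^2 = (1 + t) * (3 - t) / 4 := by
    rw [hF, hf, div_pow, Real.sq_sqrt hA0]; norm_num
  have h1F : 1 - F^2 = (1 - t)^2 / 4 := by rw [hFsq]; ring
  set v := (1 - F) / (2 * F) with hv
  set u := (1 + F) / (2 * F) with hu
  have h2F : (0:ℝ) < 2 * F := by linarith
  have hvpos : 0 < v := div_pos (by linarith) h2F
  have hveq : v * (2 * F) = 1 - F := div_mul_cancel₀ _ (ne_of_gt h2F)
  have hvle : v ≤ (1 - t)^2 / 4 := by
    rw [← h1F]
    nlinarith [hveq, hF1, hFlt, hvpos.le]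
  have hs0 : (0:ℝ) ≤ 1 - t := by linarith
  have hv1 : v ≤ 1 := by nlinarith [hvle]
  have huv : u = 1 + v := by rw [hu, hv]; field_simp; ring
  have hu1 : (1:ℝ) ≤ u := by rw [huv]; linarith
  have hβt := hβ t (ne_of_lt h1)
  rw [← hv, ← hu] at hβt
  -- bounds for u log u
  have hulog0 : 0 ≤ u * Real.log u :=
    mul_nonneg (by linarith) (Real.log_nonneg hu1)
  have hulog : u * Real.log u ≤ (1 - t)^2 / 2 := by
    have hlu : Real.log u ≤ u - 1 := Real.log_le_sub_one_of_pos (by linarith)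
    have : u * Real.log u ≤ u * (u - 1) := by
      apply mul_le_mul_of_nonneg_left hlu (by linarith)
    have h2 : u * (u - 1) = (1 + v) * v := by rw [huv]; ring
    nlinarith [hvle, hvpos.le, hv1]
  -- bounds for -(v log v)
  have hvlog0 : 0 ≤ -(v * Real.log v) := by
    have : Real.log v ≤ 0 := Real.log_nonpos hvpos.le hv1
    nlinarith
  have hsv : Real.sqrt v ≤ (1 - t) / 2 := by
    have : Real.sqrt v ≤ Real.sqrt ((1 - t)^2 / 4) := Real.sqrt_le_sqrt hvle
    rwa [show (1 - t)^2/4 = ((1-t)/2)^2 by ring, Real.sqrt_sq (by linarith)] at this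
  have hssv : Real.sqrt (Real.sqrt v) ≤ Real.sqrt (1 - t) := by
    apply Real.sqrt_le_sqrt
    calc Real.sqrt v ≤ (1 - t)/2 := hsv
      _ ≤ 1 - t := by linarith
  have hvlog : -(v * Real.log v) ≤ 2 * (1 - t) * Real.sqrt (1 - t) := by
    calc -(v * Real.log v) ≤ 4 * Real.sqrt v * Real.sqrt (Real.sqrt v) :=
          neg_mul_log_le v hvpos
      _ ≤ 4 * ((1 - t)/2) * Real.sqrt (1 - t) := by
          apply mul_le_mul _ hssv (Real.sqrt_nonneg _) (by linarith)
          apply mul_le_mul_of_nonneg_left hsv (by norm_num)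
      _ = 2 * (1 - t) * Real.sqrt (1 - t) := by ring
  constructor
  · rw [hβt]; linarith
  · rw [hβt]; linarith

/-- With `f(t) = √((1+t)(3−t))/2` and
`β(t) = ((1+f(t))/(2f(t)))·log((1+f(t))/(2f(t))) − ((1−f(t))/(2f(t)))·log((1−f(t))/(2f(t)))`
for `t ∈ [0,1)`, one has `β(t) → 0` and even `β(t)/(1−t) → 0` as `t → 1⁻`; consequently,
for every `x > 0` there is `t ∈ [0,1)` with `x·t + β(t) < x`, i.e. setting `β(1) = 0` and
`α(x) = inf_{t ∈ [0,1]} (x·t + β(t))`, one has `α(x) < x`. -/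
theorem beta_vanishes_near_one
    (f β : ℝ → ℝ)
    (hf : ∀ t : ℝ, f t = Real.sqrt ((1 + t) * (3 - t)) / 2)
    (hβ : ∀ t : ℝ, t ≠ 1 →
      β t = ((1 + f t) / (2 * f t)) * Real.log ((1 + f t) / (2 * f t)) -
        ((1 - f t) / (2 * f t)) * Real.log ((1 - f t) / (2 * f t)))
    (hβ1 : β 1 = 0) :
    Tendsto β (nhdsWithin 1 (Set.Iio 1)) (nhds 0) ∧
    Tendsto (fun t => β t / (1 - t)) (nhdsWithin 1 (Set.Iio 1)) (nhds 0) ∧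
    (∀ x : ℝ, 0 < x → ∃ t : ℝ, 0 ≤ t ∧ t < 1 ∧ x * t + β t < x) ∧
    (∀ x : ℝ, 0 < x → sInf ((fun t => x * t + β t) '' Set.Icc (0 : ℝ) 1) < x) := by
  have hev0 : ∀ᶠ t in nhdsWithin (1:ℝ) (Set.Iio 1), (0:ℝ) < t :=
    eventually_nhdsWithin_of_eventually_nhds (eventually_gt_nhds zero_lt_one)
  have hev1 : ∀ᶠ t in nhdsWithin (1:ℝ) (Set.Iio 1), t < 1 := by
    filter_upwards [self_mem_nhdsWithin] with t ht using ht
  -- the squeeze upper function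
  have hg : Tendsto (fun t : ℝ => (1 - t)/2 + 2 * Real.sqrt (1 - t))
      (nhdsWithin 1 (Set.Iio 1)) (nhds 0) := by
    have hc : Continuous (fun t : ℝ => (1 - t)/2 + 2 * Real.sqrt (1 - t)) := by
      continuity
    have := (hc.tendsto 1).mono_left (nhdsWithin_le_nhds (s := Set.Iio 1))
    simpa using this
  have h2 : Tendsto (fun t => β t / (1 - t)) (nhdsWithin 1 (Set.Iio 1)) (nhds 0) := by
    apply tendsto_of_tendsto_of_tendsto_of_le_of_le' tendsto_const_nhds hg
    · filter_upwards [hev0, hev1] with t ht0 ht1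
      exact div_nonneg (beta_bd f β hf hβ t ht0.le ht1).1 (by linarith)
    · filter_upwards [hev0, hev1] with t ht0 ht1
      rw [div_le_iff₀ (by linarith : (0:ℝ) < 1 - t)]
      calc β t ≤ (1 - t)^2/2 + 2*(1-t)*Real.sqrt (1-t) :=
            (beta_bd f β hf hβ t ht0.le ht1).2
        _ = ((1 - t)/2 + 2 * Real.sqrt (1 - t)) * (1 - t) := by ring
  have h1 : Tendsto β (nhdsWithin 1 (Set.Iio 1)) (nhds 0) := by
    have hmul : Tendsto (fun t => (β t / (1 - t)) * (1 - t))
        (nhdsWithin 1 (Set.Iio 1)) (nhds 0) := by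
      have hlin : Tendsto (fun t : ℝ => 1 - t) (nhdsWithin (1:ℝ) (Set.Iio 1)) (nhds 0) := by
        have : Continuous (fun t : ℝ => 1 - t) := by continuity
        have := (this.tendsto 1).mono_left (nhdsWithin_le_nhds (s := Set.Iio 1))
        simpa using this
      simpa using h2.mul hlin
    apply hmul.congr'
    filter_upwards [hev1] with t ht1
    rw [div_mul_cancel₀ _ (by linarith : (1:ℝ) - t ≠ 0)]
  have h3 : ∀ x : ℝ, 0 < x → ∃ t : ℝ, 0 ≤ t ∧ t < 1 ∧ x * t + β t < x := by
    intro x hx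
    have hlt : ∀ᶠ t in nhdsWithin (1:ℝ) (Set.Iio 1), β t / (1 - t) < x :=
      h2.eventually (Filter.Tendsto.eventually_lt_const hx tendsto_id)
    obtain ⟨t, htlt, ht0, ht1⟩ := (hlt.and (hev0.and hev1)).exists
    refine ⟨t, ht0.le, ht1, ?_⟩
    rw [div_lt_iff₀ (by linarith : (0:ℝ) < 1 - t)] at htlt
    nlinarith
  refine ⟨h1, h2, h3, ?_⟩
  intro x hx
  obtain ⟨t, ht0, ht1, hlt⟩ := h3 x hx
  have hbdd : BddBelow ((fun t => x * t + β t) '' Set.Icc (0 : ℝ) 1) := by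
    refine ⟨0, ?_⟩
    rintro y ⟨s, ⟨hs0, hs1⟩, rfl⟩
    have hβs : 0 ≤ β s := by
      rcases eq_or_lt_of_le hs1 with h | h
      · rw [h, hβ1]
      · exact (beta_bd f β hf hβ s hs0 h).1
    have : 0 ≤ x * s := mul_nonneg hx.le hs0
    dsimp; linarith
  have hmem : x * t + β t ∈ (fun t => x * t + β t) '' Set.Icc (0 : ℝ) 1 :=
    ⟨t, ⟨ht0, ht1.le⟩, rfl⟩
  exact lt_of_le_of_lt (csInf_le hbdd hmem) hlt
end

section
/- Let q, t ∈ ℂ with 0 < |q| ≤ e^{−π√3} and |q|^{1/2} ≤ |t| ≤ 1. Then the infinite products below converge, every factor of the leftmost product is positive, and ∏_{n=1}^∞ (1 − |q|^{n−1/2} − |q|^{n+1/2} − |q|^{2n}) ≤ |∏_{n=1}^∞ (1 − qⁿ t)(1 − qⁿ t^{−1})| ≤ ∏_{n=1}^∞ (1 + |q|^{n+1/2})(1 + |q|^{n−1/2}). -/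
/-!
With `x = qⁿ⁺¹t` and `y = qⁿ⁺¹t⁻¹`, each factor satisfies
`1 - |x| - |y| - |x||y| ≤ |(1 - x)(1 - y)| ≤ (1 + |x|)(1 + |y|)`.
On the annulus `|x||y| = |q|^{2n+2}` is fixed, while `|x| + |y| = |q|^{n+1}(|t| + |t|⁻¹)` is
largest on the inner circle `|t| = |q|^{1/2}`, where it equals `|q|^{n+1/2} + |q|^{n+3/2}`.
Since `e^{-π√3} ≤ 1/4`, the lower factors are positive, and the pointwise bounds pass to the
convergent products.
-/

open Real


theorem tprod_le_tprod_of_nonneg {ι α : Type*} [CommSemiring α] [PartialOrder α]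
    [IsOrderedRing α] [TopologicalSpace α] [OrderClosedTopology α] {f g : ι → α}
    (hf₀ : ∀ i, 0 ≤ f i) (hfg : ∀ i, f i ≤ g i) (hf : Multipliable f)
    (hg : Multipliable g) : ∏' i, f i ≤ ∏' i, g i :=
  le_of_tendsto_of_tendsto' hf.hasProd hg.hasProd fun _ ↦
    Finset.prod_le_prod (fun i _ ↦ hf₀ i) (fun i _ ↦ hfg i)

section NormedRing

variable {R : Type*} [NormedRing R] [NormOneClass R]

theorem one_sub_norm_sub_norm_sub_norm_mul_le_norm_one_sub_mul_one_sub (x y : R) :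
    1 - ‖x‖ - ‖y‖ - ‖x‖ * ‖y‖ ≤ ‖(1 - x) * (1 - y)‖ := by
  have hexpand : (1 - x) * (1 - y) = 1 - (x + y - x * y) := by noncomm_ring
  calc 1 - ‖x‖ - ‖y‖ - ‖x‖ * ‖y‖ ≤ 1 - ‖x + y - x * y‖ := by
        linarith [norm_sub_le (x + y) (x * y), norm_add_le x y, norm_mul_le x y]
    _ = ‖(1 : R)‖ - ‖x + y - x * y‖ := by rw [norm_one]
    _ ≤ ‖(1 - x) * (1 - y)‖ := hexpand ▸ norm_sub_norm_le _ _

theorem norm_one_sub_mul_one_sub_le (x y : R) :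
    ‖(1 - x) * (1 - y)‖ ≤ (1 + ‖x‖) * (1 + ‖y‖) := by
  have hx : ‖1 - x‖ ≤ 1 + ‖x‖ := (norm_sub_le _ _).trans_eq (by rw [norm_one])
  have hy : ‖1 - y‖ ≤ 1 + ‖y‖ := (norm_sub_le _ _).trans_eq (by rw [norm_one])
  exact (norm_mul_le _ _).trans (mul_le_mul hx hy (norm_nonneg _) (by positivity))

end NormedRing

theorem multipliable_one_sub_pow_succ_mul {R : Type*} [NormedCommRing R] [NormOneClass R]
    [CompleteSpace R] {q : R} (hq : ‖q‖ < 1) (c : R) :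
    Multipliable fun n : ℕ ↦ 1 - q ^ (n + 1) * c := by
  simp_rw [sub_eq_add_neg]
  refine multipliable_one_add_of_summable <|
    Summable.of_nonneg_of_le (fun _ ↦ norm_nonneg _) (fun n ↦ ?_)
      ((summable_geometric_of_lt_one (norm_nonneg q) hq).mul_right (‖q‖ * ‖c‖))
  calc ‖-(q ^ (n + 1) * c)‖ ≤ ‖q‖ ^ (n + 1) * ‖c‖ := by
        rw [norm_neg]
        exact (norm_mul_le _ _).trans
          (mul_le_mul_of_nonneg_right (norm_pow_le _ _) (norm_nonneg _))
    _ = ‖q‖ ^ n * (‖q‖ * ‖c‖) := by ring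

namespace Real

theorem add_inv_le_add_inv_of_le {r s : ℝ} (hr : 0 < r) (hrs : r ≤ s) (hs : s ≤ 1) :
    s + s⁻¹ ≤ r + r⁻¹ := by
  have hs₀ : 0 < s := hr.trans_le hrs
  have hdiff : r + r⁻¹ - (s + s⁻¹) = (s - r) * (1 - r * s) / (r * s) := by
    field_simp
    ring
  rw [← sub_nonneg, hdiff]
  exact div_nonneg (mul_nonneg (by linarith) (by nlinarith)) (by positivity)

theorem exp_neg_pi_mul_sqrt_three_le : exp (-(π * √3)) ≤ 1 / 4 := by
  have hpi : 2 ≤ π * √3 := by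
    nlinarith [pi_gt_three, one_le_sqrt.2 (show (1 : ℝ) ≤ 3 by norm_num)]
  have he : 4 ≤ exp 2 := by
    rw [show (2 : ℝ) = 1 + 1 by norm_num, exp_add]
    nlinarith [add_one_le_exp 1]
  calc exp (-(π * √3)) ≤ exp (-2) := exp_le_exp.2 (by linarith)
    _ = (exp 2)⁻¹ := exp_neg 2
    _ ≤ 1 / 4 := by rw [one_div]; exact inv_anti₀ (by norm_num) he

theorem rpow_add_three_halves_mul_rpow_add_half {a : ℝ} (ha : 0 < a) (x : ℝ) :
    a ^ (x + 3 / 2) * a ^ (x + 1 / 2) = a ^ (2 * x + 2) := by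
  rw [← rpow_add ha]
  ring_nf

theorem one_sub_rpow_add_half_sub_rpow_add_three_halves_sub_pos {a : ℝ} (ha₀ : 0 < a)
    (ha : a ≤ 1 / 4) (n : ℕ) :
    0 < 1 - a ^ ((n : ℝ) + 1 / 2) - a ^ ((n : ℝ) + 3 / 2) - a ^ (2 * (n : ℝ) + 2) := by
  set x := a ^ ((n : ℝ) + 1 / 2) with hx_def
  have hx₀ : 0 ≤ x := rpow_nonneg ha₀.le _
  have hx : x ≤ 1 / 2 := by
    have hsq : x ^ 2 ≤ 1 / 4 := by
      calc x ^ 2 = a ^ (2 * (n : ℝ) + 1) := by rw [← rpow_mul_natCast ha₀.le]; ring_nf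
        _ ≤ a ^ (1 : ℝ) :=
          rpow_le_rpow_of_exponent_ge ha₀ (by linarith) (le_add_of_nonneg_left (by positivity))
        _ ≤ 1 / 4 := by rwa [rpow_one]
    nlinarith
  have h₃ : a ^ ((n : ℝ) + 3 / 2) = a * x := by
    rw [hx_def, ← rpow_one_add' ha₀.le (by positivity)]
    ring_nf
  have h₄ : a ^ (2 * (n : ℝ) + 2) = a * x ^ 2 := by
    rw [hx_def, ← rpow_mul_natCast ha₀.le, ← rpow_one_add' ha₀.le (by positivity)]
    ring_nf
  rw [h₃, h₄]
  nlinarith [mul_nonneg ha₀.le hx₀, mul_nonneg ha₀.le (sq_nonneg x)]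

theorem summable_rpow_mul_natCast_add {a : ℝ} (ha₀ : 0 < a) (ha₁ : a < 1) {k : ℝ}
    (hk : 0 < k) (c : ℝ) : Summable fun n : ℕ ↦ a ^ (k * n + c) := by
  refine ((summable_geometric_of_lt_one (rpow_nonneg ha₀.le k)
    (rpow_lt_one ha₀.le ha₁ hk)).mul_right (a ^ c)).congr fun n ↦ ?_
  rw [rpow_add ha₀, rpow_mul ha₀.le, rpow_natCast]

theorem summable_rpow_natCast_add {a : ℝ} (ha₀ : 0 < a) (ha₁ : a < 1) (c : ℝ) :
    Summable fun n : ℕ ↦ a ^ ((n : ℝ) + c) := by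
  simpa only [one_mul] using summable_rpow_mul_natCast_add ha₀ ha₁ one_pos c

theorem multipliable_one_sub_rpow_add_half_sub_rpow_add_three_halves_sub {a : ℝ}
    (ha₀ : 0 < a) (ha₁ : a < 1) :
    Multipliable fun n : ℕ ↦
      1 - a ^ ((n : ℝ) + 1 / 2) - a ^ ((n : ℝ) + 3 / 2) - a ^ (2 * (n : ℝ) + 2) := by
  have hsum := ((summable_rpow_natCast_add ha₀ ha₁ (1 / 2)).neg.sub
    (summable_rpow_natCast_add ha₀ ha₁ (3 / 2))).sub
      (summable_rpow_mul_natCast_add ha₀ ha₁ two_pos 2)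
  convert Real.multipliable_one_add_of_summable hsum using 2 with n
  ring

theorem multipliable_one_add_rpow_add_three_halves_mul_one_add_rpow_add_half {a : ℝ}
    (ha₀ : 0 < a) (ha₁ : a < 1) :
    Multipliable fun n : ℕ ↦ (1 + a ^ ((n : ℝ) + 3 / 2)) * (1 + a ^ ((n : ℝ) + 1 / 2)) :=
  (Real.multipliable_one_add_of_summable (summable_rpow_natCast_add ha₀ ha₁ _)).mul
    (Real.multipliable_one_add_of_summable (summable_rpow_natCast_add ha₀ ha₁ _))

end Real

section Annulus

variable {𝕜 : Type*} [NormedField 𝕜] {q t : 𝕜}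

theorem norm_pow_succ_mul_add_norm_pow_succ_mul_inv_le (hq : 0 < ‖q‖)
    (ht₁ : ‖q‖ ^ (1 / 2 : ℝ) ≤ ‖t‖) (ht₂ : ‖t‖ ≤ 1) (n : ℕ) :
    ‖q ^ (n + 1) * t‖ + ‖q ^ (n + 1) * t⁻¹‖ ≤
      ‖q‖ ^ ((n : ℝ) + 3 / 2) + ‖q‖ ^ ((n : ℝ) + 1 / 2) := by
  have hsplit (c : ℝ) : ‖q‖ ^ ((n + 1 : ℕ) + c) = ‖q‖ ^ (n + 1) * ‖q‖ ^ c := by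
    rw [rpow_add hq, rpow_natCast]
  calc ‖q ^ (n + 1) * t‖ + ‖q ^ (n + 1) * t⁻¹‖ = ‖q‖ ^ (n + 1) * (‖t‖ + ‖t‖⁻¹) := by
        rw [norm_mul, norm_mul, norm_pow, norm_inv]
        ring
    _ ≤ ‖q‖ ^ (n + 1) * (‖q‖ ^ (1 / 2 : ℝ) + (‖q‖ ^ (1 / 2 : ℝ))⁻¹) :=
        mul_le_mul_of_nonneg_left (add_inv_le_add_inv_of_le (rpow_pos_of_pos hq _) ht₁ ht₂)
          (by positivity)
    _ = ‖q‖ ^ ((n + 1 : ℕ) + (1 / 2 : ℝ)) + ‖q‖ ^ ((n + 1 : ℕ) + -(1 / 2 : ℝ)) := by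
        rw [hsplit, hsplit, rpow_neg hq.le]
        ring
    _ = ‖q‖ ^ ((n : ℝ) + 3 / 2) + ‖q‖ ^ ((n : ℝ) + 1 / 2) := by
        push_cast
        ring_nf

theorem norm_pow_succ_mul_mul_norm_pow_succ_mul_inv (ht : t ≠ 0) (n : ℕ) :
    ‖q ^ (n + 1) * t‖ * ‖q ^ (n + 1) * t⁻¹‖ = ‖q‖ ^ (2 * (n : ℝ) + 2) := by
  have ht' : ‖t‖ ≠ 0 := norm_ne_zero_iff.2 ht
  rw [norm_mul, norm_mul, norm_pow, norm_inv,
    show 2 * (n : ℝ) + 2 = (2 * n + 2 : ℕ) by push_cast; ring, rpow_natCast]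
  field_simp
  ring

theorem one_sub_rpow_le_norm_one_sub_mul_one_sub (hq : 0 < ‖q‖)
    (ht₁ : ‖q‖ ^ (1 / 2 : ℝ) ≤ ‖t‖) (ht₂ : ‖t‖ ≤ 1) (n : ℕ) :
    1 - ‖q‖ ^ ((n : ℝ) + 1 / 2) - ‖q‖ ^ ((n : ℝ) + 3 / 2) - ‖q‖ ^ (2 * (n : ℝ) + 2) ≤
      ‖(1 - q ^ (n + 1) * t) * (1 - q ^ (n + 1) * t⁻¹)‖ := by
  have ht : t ≠ 0 := norm_pos_iff.1 ((rpow_pos_of_pos hq _).trans_le ht₁)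
  have hlow := one_sub_norm_sub_norm_sub_norm_mul_le_norm_one_sub_mul_one_sub
    (q ^ (n + 1) * t) (q ^ (n + 1) * t⁻¹)
  rw [norm_pow_succ_mul_mul_norm_pow_succ_mul_inv ht] at hlow
  linarith [norm_pow_succ_mul_add_norm_pow_succ_mul_inv_le hq ht₁ ht₂ n]

theorem norm_one_sub_mul_one_sub_le_rpow (hq : 0 < ‖q‖)
    (ht₁ : ‖q‖ ^ (1 / 2 : ℝ) ≤ ‖t‖) (ht₂ : ‖t‖ ≤ 1) (n : ℕ) :
    ‖(1 - q ^ (n + 1) * t) * (1 - q ^ (n + 1) * t⁻¹)‖ ≤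
      (1 + ‖q‖ ^ ((n : ℝ) + 3 / 2)) * (1 + ‖q‖ ^ ((n : ℝ) + 1 / 2)) := by
  have ht : t ≠ 0 := norm_pos_iff.1 ((rpow_pos_of_pos hq _).trans_le ht₁)
  have hprod := norm_pow_succ_mul_mul_norm_pow_succ_mul_inv (q := q) ht n
  rw [← rpow_add_three_halves_mul_rpow_add_half hq] at hprod
  calc ‖(1 - q ^ (n + 1) * t) * (1 - q ^ (n + 1) * t⁻¹)‖
      ≤ (1 + ‖q ^ (n + 1) * t‖) * (1 + ‖q ^ (n + 1) * t⁻¹‖) := norm_one_sub_mul_one_sub_le _ _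
    _ ≤ (1 + ‖q‖ ^ ((n : ℝ) + 3 / 2)) * (1 + ‖q‖ ^ ((n : ℝ) + 1 / 2)) := by
        linarith [norm_pow_succ_mul_add_norm_pow_succ_mul_inv_le hq ht₁ ht₂ n]

end Annulus

/-- For `q, t ∈ ℂ` with `0 < |q| ≤ e^{−π√3}` and `|q|^{1/2} ≤ |t| ≤ 1`, the infinite products
`∏_{n≥1} (1 − |q|^{n−1/2} − |q|^{n+1/2} − |q|^{2n})`, `∏_{n≥1} (1 − qⁿt)(1 − qⁿt⁻¹)` and
`∏_{n≥1} (1 + |q|^{n+1/2})(1 + |q|^{n−1/2})` converge, every factor of the first is positive,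
and the first bounds `|∏_{n≥1} (1 − qⁿt)(1 − qⁿt⁻¹)|` from below while the last bounds it
from above. (The products below are indexed by `n : ℕ`, with `n + 1` playing the role of
`n ≥ 1`.) -/
theorem tate_product_annulus_bounds
    (q t : ℂ) (hq0 : 0 < ‖q‖)
    (hq : ‖q‖ ≤ Real.exp (-(π * Real.sqrt 3)))
    (ht1 : ‖q‖ ^ ((1 : ℝ) / 2) ≤ ‖t‖)
    (ht2 : ‖t‖ ≤ 1) :
    Multipliable (fun n : ℕ => 1 - ‖q‖ ^ ((n : ℝ) + 1 / 2)
        - ‖q‖ ^ ((n : ℝ) + 3 / 2) - ‖q‖ ^ (2 * (n : ℝ) + 2)) ∧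
    Multipliable (fun n : ℕ => (1 - q ^ (n + 1) * t) * (1 - q ^ (n + 1) * t⁻¹)) ∧
    Multipliable (fun n : ℕ => (1 + ‖q‖ ^ ((n : ℝ) + 3 / 2))
        * (1 + ‖q‖ ^ ((n : ℝ) + 1 / 2))) ∧
    (∀ n : ℕ, 0 < 1 - ‖q‖ ^ ((n : ℝ) + 1 / 2)
        - ‖q‖ ^ ((n : ℝ) + 3 / 2) - ‖q‖ ^ (2 * (n : ℝ) + 2)) ∧
    (∏' n : ℕ, (1 - ‖q‖ ^ ((n : ℝ) + 1 / 2)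
        - ‖q‖ ^ ((n : ℝ) + 3 / 2) - ‖q‖ ^ (2 * (n : ℝ) + 2))) ≤
      ‖∏' n : ℕ, (1 - q ^ (n + 1) * t) * (1 - q ^ (n + 1) * t⁻¹)‖ ∧
    ‖∏' n : ℕ, (1 - q ^ (n + 1) * t) * (1 - q ^ (n + 1) * t⁻¹)‖ ≤
      ∏' n : ℕ, (1 + ‖q‖ ^ ((n : ℝ) + 3 / 2))
        * (1 + ‖q‖ ^ ((n : ℝ) + 1 / 2)) := by
  have hq_le : ‖q‖ ≤ 1 / 4 := hq.trans exp_neg_pi_mul_sqrt_three_le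
  have hq1 : ‖q‖ < 1 := by linarith
  have hpos := one_sub_rpow_add_half_sub_rpow_add_three_halves_sub_pos hq0 hq_le
  have hmL := multipliable_one_sub_rpow_add_half_sub_rpow_add_three_halves_sub hq0 hq1
  have hmU := multipliable_one_add_rpow_add_three_halves_mul_one_add_rpow_add_half hq0 hq1
  have hmF : Multipliable fun n : ℕ ↦ (1 - q ^ (n + 1) * t) * (1 - q ^ (n + 1) * t⁻¹) :=
    (multipliable_one_sub_pow_succ_mul hq1 t).mul (multipliable_one_sub_pow_succ_mul hq1 t⁻¹)
  refine ⟨hmL, hmF, hmU, hpos, ?_, ?_⟩ <;> rw [hmF.norm_tprod]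
  · exact tprod_le_tprod_of_nonneg (fun n ↦ (hpos n).le)
      (one_sub_rpow_le_norm_one_sub_mul_one_sub hq0 ht1 ht2) hmL hmF.norm
  · exact tprod_le_tprod_of_nonneg (fun n ↦ norm_nonneg _)
      (norm_one_sub_mul_one_sub_le_rpow hq0 ht1 ht2) hmF.norm hmU
end

section
/- There exists an absolute constant C > 0 such that for every squarefree integer D ≥ 1 the following holds with K = ℚ(√−D): every ideal class c of the ring of integers 𝒪_K with c³ trivial contains a nonzero integral ideal 𝔞 whose absolute norm m = N(𝔞) satisfies m ≤ C·√D, and moreover there exist integers a, b ∈ ℤ with 4·m³ = a² + D·b². -/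
open NumberField
open scoped nonZeroDivisors

open Polynomial Module
open scoped Real

set_option maxHeartbeats 2000000 in
/-- There is an absolute constant `C > 0` such that for every squarefree integer `D ≥ 1` and
`K = ℚ(√−D)`, every `3`-torsion ideal class of `𝒪_K` contains a nonzero integral ideal `𝔞`
whose norm `m = N(𝔞)` satisfies `m ≤ C·√D`, and `4·m³ = a² + D·b²` for some `a, b ∈ ℤ`. -/
theorem three_torsion_small_representative :
    ∃ C : ℝ, 0 < C ∧
      ∀ D : ℤ, 1 ≤ D → Squarefree D →
        ∀ (K : Type) [Field K] [NumberField K] (α : K),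
          α ^ 2 = (-D : ℤ) → IntermediateField.adjoin ℚ {α} = ⊤ →
            ∀ c : ClassGroup (𝓞 K), c ^ 3 = 1 →
              ∃ I : (Ideal (𝓞 K))⁰, ClassGroup.mk0 I = c ∧
                ((Ideal.absNorm (I : Ideal (𝓞 K)) : ℝ) ≤ C * Real.sqrt D ∧
                  ∃ a b : ℤ, 4 * (Ideal.absNorm (I : Ideal (𝓞 K)) : ℤ) ^ 3 =
                    a ^ 2 + D * b ^ 2) := by
  refine ⟨2, by norm_num, ?_⟩
  intro D hD hsqf K _ _ α hα hadj c hc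
  -- ## Step 1 : the degree of `K` is 2
  have hrank : Module.finrank ℚ K = 2 := by
    set p : ℚ[X] := X ^ 2 + C (D : ℚ) with hp
    have hroot : Polynomial.aeval α p = 0 := by
      simp only [hp, map_add, map_pow, aeval_X, aeval_C, hα]
      push_cast [map_intCast]
      ring
    have hmonic : p.Monic := by
      simpa [hp] using Polynomial.monic_X_pow_add_C (R := ℚ) (D : ℚ) (two_ne_zero)
    have hint : IsIntegral ℚ α := ⟨p, hmonic, hroot⟩
    have hdvd : minpoly ℚ α ∣ p := minpoly.dvd ℚ α hroot
    have hdeg : (minpoly ℚ α).natDegree = 2 := by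
      have hple : (minpoly ℚ α).natDegree ≤ 2 := by
        have := Polynomial.natDegree_le_of_dvd hdvd hmonic.ne_zero
        rwa [hp, Polynomial.natDegree_X_pow_add_C] at this
      have h1 : (minpoly ℚ α).natDegree ≠ 1 := by
        intro h
        obtain ⟨r, hr⟩ := (minpoly.natDegree_eq_one_iff).mp h
        have : (r : ℚ) ^ 2 = -(D : ℚ) := by
          have := hα
          rw [← hr] at this
          have h2 : (algebraMap ℚ K) (r ^ 2) = (algebraMap ℚ K) (-(D : ℚ)) := by
            push_cast at this ⊢
            simpa [map_pow] using this
          exact (algebraMap ℚ K).injective h2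
        nlinarith [sq_nonneg (r : ℚ), (by exact_mod_cast hD : (1:ℚ) ≤ (D:ℚ))]
      have hpos : 0 < (minpoly ℚ α).natDegree := minpoly.natDegree_pos hint
      omega
    rw [← IntermediateField.finrank_top' (F := ℚ) (E := K), ← hadj,
      IntermediateField.adjoin.finrank hint, hdeg]
  -- ## Step 2 : the basis `{1, α}` and the multiplication matrix
  have hDK : ((-D : ℤ) : K) ≠ 0 := by
    simp only [ne_eq, Int.cast_eq_zero, neg_eq_zero]
    omega
  have hcast : ((-D : ℤ) : K) = algebraMap ℚ K (-(D:ℚ)) := by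
    push_cast [map_neg, map_intCast]
    ring
  have hli : LinearIndependent ℚ ![1, α] := by
    rw [LinearIndependent.pair_iff' (by norm_num : (1:K) ≠ 0)]
    intro a ha
    have h0 : ((-D : ℤ) : K) = (a • (1:K)) ^ 2 := by rw [← hα, ha]
    rw [_root_.smul_pow, one_pow, ← Algebra.algebraMap_eq_smul_one, hcast] at h0
    have h2 : (-D : ℚ) = a ^ 2 := (algebraMap ℚ K).injective h0
    nlinarith [sq_nonneg a, (by exact_mod_cast hD : (1:ℚ) ≤ (D:ℚ))]
  have hcard : Fintype.card (Fin 2) = Module.finrank ℚ K := by simp [hrank]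
  set b : Basis (Fin 2) ℚ K := basisOfLinearIndependentOfCardEqFinrank hli hcard with hbdef
  have hb : ⇑b = ![1, α] := coe_basisOfLinearIndependentOfCardEqFinrank hli hcard
  have hb0 : b 0 = 1 := by rw [hb]; rfl
  have hb1 : b 1 = α := by rw [hb]; rfl
  have hmat : ∀ x y : ℚ, Algebra.leftMulMatrix b (algebraMap ℚ K x + y • α) =
      !![x, -(D:ℚ)*y; y, x] := by
    intro x y
    set γ := algebraMap ℚ K x + y • α with hγ
    have hγ0 : γ * b 0 = x • b 0 + y • b 1 := by
      rw [hb0, hb1, mul_one, hγ, Algebra.algebraMap_eq_smul_one]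
    have hγ1 : γ * b 1 = (-(D:ℚ)*y) • b 0 + x • b 1 := by
      rw [hb0, hb1, hγ, add_mul, smul_mul_assoc, ← sq, hα, hcast, Algebra.smul_def,
        Algebra.smul_def, Algebra.smul_def, ← map_mul, mul_one]
      rw [add_comm]
      congr 1
      · congr 1; ring
    ext i j
    rw [Algebra.leftMulMatrix_eq_repr_mul]
    fin_cases j
    · rw [show (⟨0, by norm_num⟩ : Fin 2) = 0 from rfl, hγ0]
      simp only [map_add, map_smul, b.repr_self]
      fin_cases i <;> simp [Finsupp.single_apply]
    · rw [show (⟨1, by norm_num⟩ : Fin 2) = 1 from rfl, hγ1]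
      simp only [map_add, map_smul, b.repr_self]
      fin_cases i <;> simp [Finsupp.single_apply]
  -- ## Step 3 : the discriminant bound `|discr K| ≤ 4 D`
  have hint : IsIntegral ℤ α := by
    refine ⟨X ^ 2 + C D, ?_, ?_⟩
    · simpa using Polynomial.monic_X_pow_add_C (R := ℤ) D (two_ne_zero)
    · simp only [eval₂_add, eval₂_X_pow, eval₂_C, hα]
      push_cast [algebraMap_int_eq, eq_intCast]
      ring
  have hdisc : |NumberField.discr K| ≤ 4 * D := by
    have htr : ∀ x y : ℚ, Algebra.trace ℚ K (algebraMap ℚ K x + y • α) = 2 * x := by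
      intro x y
      rw [Algebra.trace_eq_matrix_trace b, hmat, Matrix.trace_fin_two_of]
      ring
    have htr1 : Algebra.trace ℚ K (b 0 * b 0) = 2 := by
      rw [hb0, mul_one]
      simpa using htr 1 0
    have htr2 : Algebra.trace ℚ K (b 0 * b 1) = 0 := by
      rw [hb0, hb1, one_mul]
      simpa using htr 0 1
    have htr3 : Algebra.trace ℚ K (b 1 * b 1) = -2 * D := by
      rw [hb1, ← sq, hα, hcast]
      simpa using htr (-(D:ℚ)) 0
    have hdiscrb : Algebra.discr ℚ ⇑b = -4 * D := by
      rw [Algebra.discr_def]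
      have : Algebra.traceMatrix ℚ ⇑b = !![(2:ℚ), 0; 0, -2*(D:ℚ)] := by
        ext i j
        fin_cases i <;> fin_cases j <;>
          simp only [Algebra.traceMatrix_apply, Algebra.traceForm_apply] <;>
          first
            | simpa using htr1
            | simpa using htr2
            | simpa using (by rw [mul_comm]; exact htr2 : Algebra.trace ℚ K (b 1 * b 0) = 0)
            | simpa using htr3
      rw [this, Matrix.det_fin_two_of]
      ring
    have hcard' : Fintype.card (Free.ChooseBasisIndex ℤ (𝓞 K)) = 2 := by
      rw [← Module.finrank_eq_card_chooseBasisIndex, RingOfIntegers.rank, hrank]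
    let e : Free.ChooseBasisIndex ℤ (𝓞 K) ≃ Fin 2 := Fintype.equivFinOfCardEq hcard'
    let b' : Basis (Fin 2) ℚ K := (integralBasis K).reindex e
    have hd : Algebra.discr ℚ ⇑b = (b'.toMatrix ⇑b).det ^ 2 * Algebra.discr ℚ ⇑b' := by
      conv_lhs => rw [← Basis.toMatrix_map_vecMul b' ⇑b]
      exact Algebra.discr_of_matrix_vecMul ⇑b' (b'.toMatrix ⇑b)
    have hd' : Algebra.discr ℚ ⇑b' = (NumberField.discr K : ℚ) := by
      rw [show ⇑b' = ⇑(integralBasis K) ∘ ⇑e.symm from by ext i; simp [b'],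
        Algebra.discr_reindex, ← NumberField.coe_discr]
    have hbj : ∀ j : Fin 2, ∃ z : 𝓞 K, algebraMap (𝓞 K) K z = b j := by
      intro j
      fin_cases j
      · exact ⟨1, by rw [map_one]; exact hb0.symm⟩
      · exact ⟨⟨α, hint⟩, hb1.symm⟩
    have hPint : ∀ i j, IsIntegral ℤ ((b'.toMatrix ⇑b) i j) := by
      intro i j
      rw [Basis.toMatrix_apply]
      obtain ⟨z, hz⟩ := hbj j
      rw [show b' = (integralBasis K).reindex e from rfl, Basis.repr_reindex_apply, ← hz,
        integralBasis_repr_apply]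
      exact isIntegral_algebraMap
    obtain ⟨d, hdd⟩ := IsIntegrallyClosed.isIntegral_iff.mp (IsIntegral.det fun i j => hPint i j)
    have hdetne : (b'.toMatrix ⇑b).det ≠ 0 := by
      have h1 : (b'.toMatrix ⇑b) * (b.toMatrix ⇑b') = 1 := Basis.toMatrix_mul_toMatrix_flip b' b
      have := congrArg Matrix.det h1
      rw [Matrix.det_mul, Matrix.det_one] at this
      exact left_ne_zero_of_mul_eq_one this
    have hdne : d ≠ 0 := by
      intro h
      rw [h, map_zero] at hdd
      exact hdetne hdd.symm
    have heqQ : (-4 * D : ℚ) = (d : ℚ) ^ 2 * (NumberField.discr K : ℚ) := by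
      rw [← hdiscrb, hd, hd']
      congr 1
      rw [← hdd]
      norm_num
    have heqZ : (-4 * D : ℤ) = d ^ 2 * NumberField.discr K := by exact_mod_cast heqQ
    have hd2 : 1 ≤ d ^ 2 := by
      have := Int.one_le_abs hdne
      nlinarith [sq_abs d]
    have hneg : NumberField.discr K < 0 := by nlinarith
    rw [abs_of_neg hneg]
    nlinarith
  -- ## Step 4 : Minkowski bound
  obtain ⟨I, hIc, hIN⟩ := NumberField.exists_ideal_in_class_of_norm_le (K := K) c
  refine ⟨I, hIc, ?_, ?_⟩
  · -- the norm bound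
    refine hIN.trans ?_
    have hπ : (3:ℝ) < π := Real.pi_gt_three
    have hπ4 : π ≤ 4 := Real.pi_le_four
    have hc1 : NumberField.InfinitePlace.nrComplexPlaces K ≤ 1 := by
      have := NumberField.InfinitePlace.card_add_two_mul_card_eq_rank K
      rw [hrank] at this
      omega
    have hsqrtD : (0:ℝ) ≤ Real.sqrt D := Real.sqrt_nonneg _
    have hdiscR : Real.sqrt |(NumberField.discr K : ℝ)| ≤ 2 * Real.sqrt D := by
      rw [show (2:ℝ) * Real.sqrt D = Real.sqrt (4 * D) by
        rw [show (4:ℝ) * D = 2^2 * D by ring, Real.sqrt_mul (by positivity),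
          Real.sqrt_sq (by norm_num)]]
      apply Real.sqrt_le_sqrt
      push_cast [← Int.cast_abs]
      exact_mod_cast hdisc
    calc (4 / π) ^ NumberField.InfinitePlace.nrComplexPlaces K *
          ((finrank ℚ K).factorial / (finrank ℚ K : ℝ) ^ (finrank ℚ K) *
            Real.sqrt |(NumberField.discr K : ℝ)|)
        ≤ (4 / π) ^ 1 * ((finrank ℚ K).factorial / (finrank ℚ K : ℝ) ^ (finrank ℚ K) *
            (2 * Real.sqrt D)) := by
          gcongr
          rw [le_div_iff₀ (by linarith : (0:ℝ) < π)]
          linarith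
        _ = (4 / π) * (1 / 2 * (2 * Real.sqrt D)) := by
          rw [hrank]
          norm_num [Nat.factorial]
        _ ≤ 2 * Real.sqrt D := by
          rw [div_mul_eq_mul_div, div_mul_eq_mul_div, div_le_iff₀ (by linarith)]
          nlinarith
  · -- ## Step 5 : the representation `4 m³ = a² + D b²`
    have h1 : ClassGroup.mk0 (I ^ 3) = 1 := by rw [map_pow, hIc, hc]
    have hprin : ((I : Ideal (𝓞 K)) ^ 3).IsPrincipal := by
      rw [show ((I : Ideal (𝓞 K)) ^ 3) = ((I ^ 3 : (Ideal (𝓞 K))⁰) : Ideal (𝓞 K)) from rfl]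
      exact (ClassGroup.mk0_eq_one_iff (I ^ 3).2).mp (by rwa [Subtype.eta])
    obtain ⟨γ, hγ⟩ := hprin
    set xq : ℚ := b.repr (γ : K) 0 with hxq
    set yq : ℚ := b.repr (γ : K) 1 with hyq
    have hγK : (γ : K) = algebraMap ℚ K xq + yq • α := by
      conv_lhs => rw [← Basis.sum_repr b (γ : K)]
      rw [Fin.sum_univ_two, hb0, hb1, Algebra.algebraMap_eq_smul_one]
    have hnormγ : Algebra.norm ℚ (γ : K) = xq ^ 2 + D * yq ^ 2 := by
      rw [hγK, Algebra.norm_eq_matrix_det b, hmat, Matrix.det_fin_two_of]; ring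
    have htrγ : Algebra.trace ℚ K (γ : K) = 2 * xq := by
      rw [hγK, Algebra.trace_eq_matrix_trace b, hmat, Matrix.trace_fin_two_of]; ring
    obtain ⟨a, ha0⟩ := IsIntegrallyClosed.isIntegral_iff.mp
      (Algebra.isIntegral_trace (R := ℤ) (L := ℚ) (γ : 𝓞 K).isIntegral_coe)
    rw [htrγ] at ha0
    have ha : (a : ℚ) = 2 * xq := by rw [← ha0]; simp [eq_intCast]
    set N : ℤ := Algebra.norm ℤ γ with hN
    have hNQ : (N : ℚ) = xq ^ 2 + D * yq ^ 2 := by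
      rw [hN, Algebra.coe_norm_int, hnormγ]
    have hNnonneg : 0 ≤ N := by
      have : (0:ℚ) ≤ (N:ℚ) := by rw [hNQ]; positivity
      exact_mod_cast this
    have hm3 : (Ideal.absNorm (I : Ideal (𝓞 K)) : ℤ) ^ 3 = N := by
      have h2 : Ideal.absNorm ((I : Ideal (𝓞 K)) ^ 3) = N.natAbs := by
        rw [hγ]
        exact Ideal.absNorm_span_singleton γ
      rw [map_pow] at h2
      have := congrArg (Nat.cast : ℕ → ℤ) h2
      push_cast at this
      rwa [abs_of_nonneg hNnonneg] at this
    set q : ℚ := 2 * yq with hq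
    have hDq : (D : ℚ) * q ^ 2 = ((4 * N - a ^ 2 : ℤ) : ℚ) := by
      push_cast
      rw [hNQ, hq]
      linear_combination ((a:ℚ) + 2*xq) * ha
    have hqden : (q.den : ℤ) = 1 := by
      have hmul : q * (q.den : ℚ) = (q.num : ℚ) := Rat.mul_den_eq_num q
      have hint' : (D : ℚ) * (q.num : ℚ) ^ 2 = ((4 * N - a ^ 2 : ℤ) : ℚ) * (q.den : ℚ) ^ 2 := by
        rw [← hmul]
        linear_combination ((q.den : ℚ)) ^ 2 * hDq
      have hintZ : D * q.num ^ 2 = (4 * N - a ^ 2) * (q.den : ℤ) ^ 2 := by exact_mod_cast hint'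
      have hdvd : ((q.den : ℤ)) ^ 2 ∣ D * q.num ^ 2 := ⟨4 * N - a ^ 2, by linarith [hintZ]⟩
      have hcop : IsCoprime (q.den : ℤ) q.num := by
        rw [Int.isCoprime_iff_gcd_eq_one]
        simpa [Int.gcd, Nat.coprime_comm] using q.reduced
      have hdvdD : ((q.den : ℤ)) ^ 2 ∣ D := (IsCoprime.pow hcop).dvd_of_dvd_mul_right hdvd
      have hunit : IsUnit ((q.den : ℤ)) := hsqf _ (by rwa [← sq])
      rcases Int.isUnit_iff.mp hunit with h | h
      · exact h
      · exfalso; omega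
    have hqint : ((q.num : ℚ)) = q := (Rat.den_eq_one_iff q).mp (by exact_mod_cast hqden)
    refine ⟨a, q.num, ?_⟩
    have hmQ : ((Ideal.absNorm (I : Ideal (𝓞 K)) : ℕ) : ℚ) ^ 3 = (N : ℚ) := by
      exact_mod_cast hm3
    have : (4 * (Ideal.absNorm (I : Ideal (𝓞 K)) : ℤ) ^ 3 : ℚ)
        = ((a ^ 2 + D * q.num ^ 2 : ℤ) : ℚ) := by
      have hnum : (q.num : ℚ) = 2 * yq := by rw [hqint, hq]
      push_cast
      rw [hmQ, hNQ]
      linear_combination (-((a:ℚ) + 2*xq)) * ha + (-(D:ℚ) * ((q.num:ℚ) + 2*yq)) * hnum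
    exact_mod_cast this
end
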